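/- arXiv:2507.01241 — 2 statements merged into one kernel-verified Lean document; each statement's English description precedes it below -/
import Mathlib

section
/- Let H be a real inner product space, let ε > 0 and η > 0, and let d_prev, g ∈ H and λ ∈ [0,1]. Define d = λ • g + (1 − λ) • d_prev. If ⟨g, d_prev⟩ ≥ 0, ‖d‖ ≤ ε, and ‖d_prev‖ > √(1 + η) · ε, then ‖g‖ ≤ √(1 + 1/η) · ε. -/
open scoped RealInnerProductSpace

set_option maxHeartbeats 1000000 in
theorem stmt0 {H : Type*} [NormedAddCommGroup H] [InnerProductSpace ℝ H]
    (ε η : ℝ) (hε : 0 < ε) (hη : 0 < η)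
    (d_prev g : H) (lam : ℝ) (hlam : lam ∈ Set.Icc (0 : ℝ) 1)
    (d : H) (hd : d = lam • g + (1 - lam) • d_prev)
    (hinner : 0 ≤ ⟪g, d_prev⟫)
    (hdle : ‖d‖ ≤ ε)
    (hdprev : ‖d_prev‖ > Real.sqrt (1 + η) * ε) :
    ‖g‖ ≤ Real.sqrt (1 + 1 / η) * ε := by
  obtain ⟨hl0, hl1⟩ := hlam
  have hsq1 : Real.sqrt (1 + η) ^ 2 = 1 + η := Real.sq_sqrt (by linarith)
  have hsq2 : Real.sqrt (1 + 1 / η) ^ 2 = 1 + 1 / η := by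
    have : (0:ℝ) ≤ 1 + 1 / η := by positivity
    exact Real.sq_sqrt this
  have h1le : (1:ℝ) ≤ Real.sqrt (1 + η) := by
    nlinarith [hsq1, Real.sqrt_nonneg (1 + η)]
  -- expand the norm
  have key : ‖d‖ ^ 2 = lam ^ 2 * ‖g‖ ^ 2 + 2 * (lam * (1 - lam)) * ⟪g, d_prev⟫
      + (1 - lam) ^ 2 * ‖d_prev‖ ^ 2 := by
    rw [hd, @norm_add_sq_real, norm_smul, norm_smul, real_inner_smul_left,
      real_inner_smul_right, Real.norm_eq_abs, Real.norm_eq_abs,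
      abs_of_nonneg hl0, abs_of_nonneg (by linarith : (0:ℝ) ≤ 1 - lam)]
    ring
  have hdprev2 : (1 + η) * ε ^ 2 ≤ ‖d_prev‖ ^ 2 := by
    have h0 : 0 ≤ Real.sqrt (1 + η) * ε := by positivity
    nlinarith [hdprev.le, norm_nonneg d_prev]
  have hd2 : ‖d‖ ^ 2 ≤ ε ^ 2 := by nlinarith [norm_nonneg d]
  have hlamp : 0 < lam := by
    rcases lt_or_eq_of_le hl0 with h | h
    · exact h
    · exfalso
      have : d = d_prev := by rw [hd, ← h]; simp
      have h2 : ‖d_prev‖ ≤ ε := this ▸ hdle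
      nlinarith [hdprev]
  -- main inequality on squares
  have hg2 : ‖g‖ ^ 2 ≤ (1 + 1 / η) * ε ^ 2 := by
    have hkey2 : lam ^ 2 * ‖g‖ ^ 2 ≤ ε ^ 2 - (1 - lam) ^ 2 * ((1 + η) * ε ^ 2) := by
      nlinarith [sq_nonneg (1 - lam), mul_nonneg (mul_nonneg hl0 (by linarith : (0:ℝ) ≤ 1 - lam)) hinner]
    have hquad : 1 - (1 + η) * (1 - lam) ^ 2 ≤ (1 + 1 / η) * lam ^ 2 := by
      have heq : (1 + 1 / η) * lam ^ 2 = ((η + 1) * lam ^ 2) / η := by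
        field_simp
      rw [heq, le_div_iff₀ hη]
      nlinarith [sq_nonneg ((1 + η) * (1 - lam) - 1)]
    have h4 : lam ^ 2 * ‖g‖ ^ 2 ≤ lam ^ 2 * ((1 + 1 / η) * ε ^ 2) := by
      nlinarith [mul_le_mul_of_nonneg_left hquad (sq_nonneg ε)]
    exact (mul_le_mul_iff_right₀ (pow_pos hlamp 2)).mp h4
  have hfin : ‖g‖ ^ 2 ≤ (Real.sqrt (1 + 1 / η) * ε) ^ 2 := by
    rw [mul_pow, hsq2]; exact hg2
  have h0 : 0 ≤ Real.sqrt (1 + 1 / η) * ε := by positivity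
  calc ‖g‖ = Real.sqrt (‖g‖ ^ 2) := (Real.sqrt_sq (norm_nonneg g)).symm
    _ ≤ Real.sqrt ((Real.sqrt (1 + 1 / η) * ε) ^ 2) := Real.sqrt_le_sqrt hfin
    _ = Real.sqrt (1 + 1 / η) * ε := Real.sqrt_sq h0
end

section
/- Let H be a real inner product space, ε > 0, η > 0, λ ∈ [0,1], and g, d ∈ H with ⟨g, d⟩ ≥ 0. If ‖g‖² > (1 + 1/η) · ε² and ‖d‖² > (1 + η) · ε², then ‖λ • g + (1 − λ) • d‖ > ε. -/
open scoped RealInnerProductSpace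

theorem stmt1 {H : Type*} [NormedAddCommGroup H] [InnerProductSpace ℝ H]
    (ε η : ℝ) (hε : 0 < ε) (hη : 0 < η)
    (lam : ℝ) (hlam : lam ∈ Set.Icc (0 : ℝ) 1)
    (g d : H) (hinner : 0 ≤ ⟪g, d⟫)
    (hg : ‖g‖ ^ 2 > (1 + 1 / η) * ε ^ 2)
    (hd : ‖d‖ ^ 2 > (1 + η) * ε ^ 2) :
    ‖lam • g + (1 - lam) • d‖ > ε := by
  obtain ⟨h0, h1⟩ := hlam
  have hsq : ‖lam • g + (1 - lam) • d‖ ^ 2 > ε ^ 2 := by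
    have hexp : ‖lam • g + (1 - lam) • d‖ ^ 2 =
        lam ^ 2 * ‖g‖ ^ 2 + (1 - lam) ^ 2 * ‖d‖ ^ 2
          + 2 * (lam * (1 - lam)) * ⟪g, d⟫ := by
      rw [norm_add_sq_real, norm_smul, norm_smul, real_inner_smul_left,
        real_inner_smul_right]
      simp [abs_of_nonneg h0, abs_of_nonneg (by linarith : (0:ℝ) ≤ 1 - lam)]
      ring
    rw [hexp]
    have key : (1 + 1 / η) * lam ^ 2 + (1 + η) * (1 - lam) ^ 2 ≥ 1 := by
      have ht : η * (1 / η) = 1 := mul_one_div_cancel hη.ne'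
      nlinarith [sq_nonneg (lam - η * (1 - lam)), hη, ht,
        mul_nonneg (mul_nonneg hη.le (one_div_nonneg.2 hη.le)) (sq_nonneg lam)]
    have hcross : 0 ≤ 2 * (lam * (1 - lam)) * ⟪g, d⟫ := by
      have : 0 ≤ lam * (1 - lam) := mul_nonneg h0 (by linarith)
      positivity
    have hkey' : (1 + 1 / η) * lam ^ 2 * ε ^ 2 + (1 + η) * (1 - lam) ^ 2 * ε ^ 2
        ≥ ε ^ 2 := by nlinarith [sq_nonneg ε]
    rcases eq_or_lt_of_le h0 with h | h
    · have hg' : (1 - lam) ^ 2 * ‖d‖ ^ 2 > (1 + η) * (1 - lam) ^ 2 * ε ^ 2 := by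
        have hl : (0:ℝ) < (1 - lam) ^ 2 := by rw [← h]; norm_num
        nlinarith
      have hgg : lam ^ 2 * ‖g‖ ^ 2 ≥ (1 + 1 / η) * lam ^ 2 * ε ^ 2 := by
        nlinarith [sq_nonneg lam]
      linarith
    · have hg' : lam ^ 2 * ‖g‖ ^ 2 > (1 + 1 / η) * lam ^ 2 * ε ^ 2 := by
        have : (0:ℝ) < lam ^ 2 := by positivity
        nlinarith
      have hdd : (1 - lam) ^ 2 * ‖d‖ ^ 2 ≥ (1 + η) * (1 - lam) ^ 2 * ε ^ 2 := by
        nlinarith [sq_nonneg (1 - lam)]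
      linarith
  nlinarith [norm_nonneg (lam • g + (1 - lam) • d)]
end
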